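/- arXiv:2310.01998 — 3 statements merged into one kernel-verified Lean document; each statement's English description precedes it below -/
import Mathlib

section
/- Let K be a field complete with respect to a nonarchimedean multiplicative norm, and L/K an algebraic field extension. For x ∈ L with minimal polynomial f_x of degree m and constant coefficient a₀, the spectral norm of x equals |a₀|^(1/m). -/
open Polynomial

/-- The terms whose supremum defines the spectral value of a polynomial. -/
noncomputable def spectralValueTerms_old {K : Type*} [NormedField K] (p : K[X]) : ℕ → ℝ :=
  fun n : ℕ => if n < p.natDegree then ‖p.coeff n‖ ^ (1 / (p.natDegree - n : ℝ)) else 0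

/-- The spectral value of a polynomial. -/
noncomputable def spectralValue_old {K : Type*} [NormedField K] (p : K[X]) : ℝ :=
  iSup (spectralValueTerms_old p)

/-- The spectral norm of an element of an algebra: the spectral value of its minimal
polynomial. -/
noncomputable def spectralNorm_old (K : Type*) (L : Type*) [NormedField K] [Field L] [Algebra K L]
    (y : L) : ℝ :=
  spectralValue_old (minpoly K y)

/-! When the norm on `K` is nontrivial this is `spectralNorm.spectralNorm_eq_norm_coeff_zero_rpow`:
over a splitting field the spectral norm is multiplicative and constant on the conjugates of `x`,
whose product is `± a₀`. When the norm is trivial, every coefficient has norm at most `1` and, for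
`x ≠ 0`, `a₀ ≠ 0` has norm `1`, so both sides are `1`. -/

theorem norm_eq_one_of_forall_norm_le_one {K : Type*} [NormedDivisionRing K]
    (hK : ∀ a : K, ‖a‖ ≤ 1) {a : K} (ha : a ≠ 0) : ‖a‖ = 1 :=
  le_antisymm (hK a) <| (inv_le_one₀ (norm_pos_iff.2 ha)).1 (norm_inv a ▸ hK a⁻¹)

theorem spectralValue_eq_one_of_norm_coeff_le_one {R : Type*} [SeminormedRing R] {p : R[X]}
    (hle : ∀ n, ‖p.coeff n‖ ≤ 1) (h0 : ‖p.coeff 0‖ = 1) (hdeg : 0 < p.natDegree) :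
    spectralValue p = 1 := by
  refine le_antisymm (ciSup_le fun n => ?_) ?_
  · rcases lt_or_ge n p.natDegree with hn | hn
    · rw [spectralValueTerms_of_lt_natDegree p hn]
      exact Real.rpow_le_one (norm_nonneg _) (hle n) (by simp [hn.le])
    · rw [spectralValueTerms_of_natDegree_le p hn]
      exact zero_le_one
  · refine le_ciSup_of_le (spectralValueTerms_bddAbove p) 0 ?_
    rw [spectralValueTerms_of_lt_natDegree p hdeg, h0, Real.one_rpow]

/-- If `K` is complete with respect to a nonarchimedean multiplicative norm and `L/K` is an
algebraic extension, then the spectral norm of `x : L` with minimal polynomial of degree `m` and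
constant coefficient `a₀` equals `‖a₀‖ ^ (1/m)`. -/
theorem spectralNorm_eq_root_zero_coeff {K : Type*} [NormedField K] [CompleteSpace K]
    (h_na : IsNonarchimedean (norm : K → ℝ)) {L : Type*} [Field L] [Algebra K L]
    [Algebra.IsAlgebraic K L] (x : L) :
    spectralNorm_old K L x =
      ‖(minpoly K x).coeff 0‖ ^ (1 / (minpoly K x).natDegree : ℝ) := by
  change spectralNorm K L x = _
  have : IsUltrametricDist K := .isUltrametricDist_of_isNonarchimedean_norm h_na
  by_cases hK : ∃ a : K, 1 < ‖a‖
  · let : NontriviallyNormedField K := { ‹NormedField K› with non_trivial := hK }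
    exact spectralNorm.spectralNorm_eq_norm_coeff_zero_rpow K L x
  simp only [not_exists, not_lt] at hK
  rcases eq_or_ne x 0 with rfl | hx
  · simp [minpoly.zero, spectralNorm_zero]
  have hx_int : IsIntegral K x := Algebra.IsIntegral.isIntegral x
  have h0 : ‖(minpoly K x).coeff 0‖ = 1 :=
    norm_eq_one_of_forall_norm_le_one hK (minpoly.coeff_zero_ne_zero hx_int hx)
  rw [spectralNorm, spectralValue_eq_one_of_norm_coeff_le_one (fun n => hK _) h0
    (minpoly.natDegree_pos hx_int), h0, Real.one_rpow]
end

section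
/- For a field K, there is a ring isomorphism between the field of Laurent series K((X)) and the completion of the field of rational functions K(X) with respect to the X-adic valuation; moreover it restricts to a ring isomorphism between the power series ring K[[X]] and the unit ball of the completion. -/
open Multiplicative LaurentSeries PowerSeries IsDedekindDomain

/-- The field of Laurent series `K⸨X⸩` is isomorphic, as a ring, to the `X`-adic completion of
the field of rational functions `K(X)`; moreover the isomorphism restricts to a ring isomorphism
between the power series ring `K⟦X⟧` and the unit ball of the completion. -/
theorem laurentSeries_ringEquiv_adicCompletion (K : Type*) [Field K] :
    ∃ (e : LaurentSeries K ≃+* (Polynomial.idealX K).adicCompletion (RatFunc K))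
      (e₀ : PowerSeries K ≃+* (Polynomial.idealX K).adicCompletionIntegers (RatFunc K)),
      ∀ F : PowerSeries K,
        ((e₀ F : (Polynomial.idealX K).adicCompletionIntegers (RatFunc K)) :
            (Polynomial.idealX K).adicCompletion (RatFunc K)) = e (F : LaurentSeries K) :=
  ⟨LaurentSeriesRingEquiv K, powerSeriesRingEquiv K, powerSeriesRingEquiv_coe_apply K⟩
end

section
/- There is a ring isomorphism between the p-adic integers ℤ_p and the unit ball of the completion of ℚ with respect to the p-adic (height-one-prime) adic valuation; consequently the residue field of this unit ball is isomorphic to the field with p elements. -/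
open Multiplicative IsDedekindDomain

/-- The prime ideal `(p)` of `ℤ`, as a height-one prime. -/
noncomputable def pHeightOneIdeal (p : ℕ) [hp : Fact p.Prime] : HeightOneSpectrum ℤ where
  asIdeal := Ideal.span {(p : ℤ)}
  isPrime := by
    rw [Ideal.span_singleton_prime (by exact_mod_cast hp.out.ne_zero)]
    exact Int.prime_iff_natAbs_prime.mpr (by simpa using hp.out)
  ne_bot := by
    simp only [ne_eq, Ideal.span_singleton_eq_bot]
    exact_mod_cast hp.out.ne_zero

open Rat.HeightOneSpectrum

-- `primesEquiv.symm` maps `p` to `(p)` transported along a ring automorphism of `ℤ`, which fixes `p`.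
theorem primesEquiv_symm_eq_pHeightOneIdeal (p : ℕ) [hp : Fact p.Prime] :
    primesEquiv.symm ⟨p, hp.out⟩ = pHeightOneIdeal p :=
  HeightOneSpectrum.ext <| (Ideal.map_span _ _).trans (by rw [Set.image_singleton, map_natCast]; rfl)

/-- The `p`-adic integers are isomorphic, as a ring, to the unit ball of the completion of `ℚ`
with respect to the `(p)`-adic valuation; consequently the residue field of this unit ball is
isomorphic to the field with `p` elements. -/
theorem padicInt_ringEquiv_adicCompletionIntegers (p : ℕ) [hp : Fact p.Prime] :
    Nonempty (ℤ_[p] ≃+* (pHeightOneIdeal p).adicCompletionIntegers ℚ) ∧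
      Nonempty
        (IsLocalRing.ResidueField ((pHeightOneIdeal p).adicCompletionIntegers ℚ) ≃+* ZMod p) := by
  rw [← primesEquiv_symm_eq_pHeightOneIdeal]
  let e := RingEquivClass.toRingEquiv (PadicInt.adicCompletionIntegersEquiv ℤ ⟨p, hp.out⟩)
  exact ⟨⟨e⟩, ⟨(IsLocalRing.ResidueField.mapEquiv e.symm).trans PadicInt.residueField⟩⟩
end
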